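/- arXiv:2508.19409 — 3 statements merged into one kernel-verified Lean document; each statement's English description precedes it below -/
import Mathlib

section
/- For any real matrices B ∈ ℝ^{n×m} (with the roles as in the Procrustes problem), the orthogonal matrix Q = UV^T, where B = UΣV^T is a singular value decomposition with U, V square orthogonal, minimizes ||QX - A||_F over all orthogonal Q whenever B = A X^T. Equivalently, for the orthogonal Procrustes problem min_{Q ∈ O(n)} ||QX - A||_F, an optimal Q is given by UV^T where UΣV^T is the SVD of A X^T. -/
/-!
Since `Q` is orthogonal, `‖Q X - A‖_F² = ‖X‖_F² + ‖A‖_F² - 2 tr (Qᵀ A Xᵀ)`, so it suffices to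
maximize `tr (Qᵀ U Σ Vᵀ) = tr (Z Σ)` with `Z = Vᵀ Qᵀ U` orthogonal. The entries of an orthogonal
matrix are bounded by `1` and `Σ` is diagonal and nonnegative, so `tr (Z Σ) ≤ tr Σ`, with
equality at `Q = U Vᵀ`, where `Z = 1`.
-/

open Matrix

noncomputable def frobNorm {p q : ℕ} (M : Matrix (Fin p) (Fin q) ℝ) : ℝ :=
  Real.sqrt ((Mᵀ * M).trace)

namespace Matrix

variable {ι κ R : Type*} [Fintype ι] [Fintype κ] [DecidableEq ι]

theorem mem_unitaryGroup_iff_transpose_mul_self {Q : Matrix ι ι ℝ} :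
    Q ∈ unitaryGroup ι ℝ ↔ Qᵀ * Q = 1 := by
  rw [mem_unitaryGroup_iff', star_eq_conjTranspose, conjTranspose_eq_transpose_of_trivial]

theorem transpose_mem_unitaryGroup {Q : Matrix ι ι ℝ} (hQ : Q ∈ unitaryGroup ι ℝ) :
    Qᵀ ∈ unitaryGroup ι ℝ := by
  simpa only [star_eq_conjTranspose, conjTranspose_eq_transpose_of_trivial] using
    Unitary.star_mem hQ

theorem trace_transpose_mul_self_orthogonal_mul_sub [CommRing R] (X A : Matrix ι κ R)
    {Q : Matrix ι ι R} (hQ : Qᵀ * Q = 1) :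
    ((Q * X - A)ᵀ * (Q * X - A)).trace
      = (Xᵀ * X).trace + (Aᵀ * A).trace - 2 * (Qᵀ * (A * Xᵀ)).trace := by
  have hcross : (Aᵀ * (Q * X)).trace = (Qᵀ * (A * Xᵀ)).trace := by
    rw [← trace_transpose, transpose_mul, transpose_mul, transpose_transpose, trace_mul_cycle,
      trace_mul_comm]
  have hcross' : (Xᵀ * Qᵀ * A).trace = (Aᵀ * (Q * X)).trace := by
    rw [← trace_transpose]
    simp only [transpose_mul, transpose_transpose, Matrix.mul_assoc]
  have hquad : Xᵀ * Qᵀ * (Q * X) = Xᵀ * X := by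
    rw [Matrix.mul_assoc, ← Matrix.mul_assoc Qᵀ, hQ, Matrix.one_mul]
  rw [transpose_sub, transpose_mul, Matrix.sub_mul, Matrix.mul_sub, Matrix.mul_sub, hquad,
    trace_sub, trace_sub, trace_sub, hcross', hcross]
  ring

theorem trace_mul_diagonal_le_of_mem_unitaryGroup {Z : Matrix ι ι ℝ}
    (hZ : Z ∈ unitaryGroup ι ℝ) {d : ι → ℝ} (hd : 0 ≤ d) :
    (Z * diagonal d).trace ≤ ∑ i, d i := by
  simp only [trace, diag_apply, mul_diagonal]
  gcongr with i
  exact mul_le_of_le_one_left (hd i) ((le_abs_self _).trans (entry_norm_bound_of_unitary hZ i i))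


theorem trace_transpose_mul_svd_le {Q U V : Matrix ι ι ℝ} (hQ : Q ∈ unitaryGroup ι ℝ)
    (hU : U ∈ unitaryGroup ι ℝ) (hV : V ∈ unitaryGroup ι ℝ) {d : ι → ℝ} (hd : 0 ≤ d) :
    (Qᵀ * (U * diagonal d * Vᵀ)).trace ≤ ((U * Vᵀ)ᵀ * (U * diagonal d * Vᵀ)).trace := by
  have hUU : Uᵀ * U = 1 := mem_unitaryGroup_iff_transpose_mul_self.mp hU
  have hVV : Vᵀ * V = 1 := mem_unitaryGroup_iff_transpose_mul_self.mp hV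
  have hZ : Vᵀ * Qᵀ * U ∈ unitaryGroup ι ℝ :=
    mul_mem (mul_mem (transpose_mem_unitaryGroup hV) (transpose_mem_unitaryGroup hQ)) hU
  calc (Qᵀ * (U * diagonal d * Vᵀ)).trace = (Vᵀ * Qᵀ * U * diagonal d).trace := by
        simp only [Matrix.mul_assoc]
        rw [trace_mul_comm Vᵀ]
        simp only [Matrix.mul_assoc]
    _ ≤ ∑ i, d i := trace_mul_diagonal_le_of_mem_unitaryGroup hZ hd
    _ = ((U * Vᵀ)ᵀ * (U * diagonal d * Vᵀ)).trace := by
        rw [transpose_mul, transpose_transpose, Matrix.mul_assoc, ← Matrix.mul_assoc Uᵀ,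
          ← Matrix.mul_assoc Uᵀ, hUU, Matrix.one_mul, trace_mul_comm, Matrix.mul_assoc, hVV,
          Matrix.mul_one, trace_diagonal]

end Matrix

/-- Orthogonal Procrustes: if `A Xᵀ = U Σ Vᵀ` is an SVD (with `U, V` orthogonal and
`Σ` diagonal with nonnegative entries), then `Q = U Vᵀ` minimizes `‖Q X - A‖_F`
over all orthogonal `Q`. -/
theorem procrustes_solution
    (n m : ℕ) (X A : Matrix (Fin n) (Fin m) ℝ)
    (U V S : Matrix (Fin n) (Fin n) ℝ)
    (hU : Uᵀ * U = 1) (hV : Vᵀ * V = 1)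
    (hSdiag : ∀ i j, i ≠ j → S i j = 0) (hSnonneg : ∀ i, 0 ≤ S i i)
    (hSVD : A * Xᵀ = U * S * Vᵀ) :
    ∀ Q : Matrix (Fin n) (Fin n) ℝ, Qᵀ * Q = 1 →
      frobNorm ((U * Vᵀ) * X - A) ≤ frobNorm (Q * X - A) := by
  intro Q hQ
  rw [← mem_unitaryGroup_iff_transpose_mul_self] at hU hV
  have hUV : (U * Vᵀ)ᵀ * (U * Vᵀ) = 1 :=
    mem_unitaryGroup_iff_transpose_mul_self.mp (mul_mem hU (transpose_mem_unitaryGroup hV))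
  have hS : S = diagonal S.diag := (IsDiag.diagonal_diag fun i j hij => hSdiag i j hij).symm
  have htrace := trace_transpose_mul_svd_le (d := S.diag)
    (mem_unitaryGroup_iff_transpose_mul_self.mpr hQ) hU hV hSnonneg
  rw [← hS, ← hSVD] at htrace
  unfold frobNorm
  apply Real.sqrt_le_sqrt
  rw [trace_transpose_mul_self_orthogonal_mul_sub X A hUV,
    trace_transpose_mul_self_orthogonal_mul_sub X A hQ]
  linarith
end

section
/- Let M = UΣV^T be a singular value decomposition of an n×m real matrix with n ≤ m, and suppose the curve t ↦ M(t) is differentiable with M(0) = M and all singular values simple and positive. Then the derivative of the diagonal singular value matrix satisfies Σ'(0) = diag part of U^T M'(0) V; in particular σ_i'(0) = u_i^T M'(0) v_i where u_i, v_i are the i-th left and right singular vectors. -/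
/-!
Differentiate `M = U Σ Vᵀ` by the product rule and conjugate by the orthogonal factors:
`Uᵀ M' V = (Uᵀ U') Σ + Σ' + Σ (V'ᵀ V)`. Differentiating `Uᵀ U = 1` and `Vᵀ V = 1` shows that
`Uᵀ U'` and `V'ᵀ V` are skew-symmetric, so their diagonals vanish; since `Σ` is diagonal, so do
the diagonals of `(Uᵀ U') Σ` and `Σ (V'ᵀ V)`, leaving `diag (Uᵀ M' V) = diag Σ'`.
-/

open Matrix

namespace Matrix

section IsDiag

variable {ι R : Type*} [Fintype ι] [NonUnitalNonAssocSemiring R] {D : Matrix ι ι R}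

theorem IsDiag.mul_apply_self (hD : D.IsDiag) (B : Matrix ι ι R) (i : ι) :
    (B * D) i i = B i i * D i i := by
  rw [mul_apply, Finset.sum_eq_single i (fun k _ hk => by rw [hD hk, mul_zero])
    (fun hi => absurd (Finset.mem_univ i) hi)]

theorem IsDiag.apply_self_mul (hD : D.IsDiag) (B : Matrix ι ι R) (i : ι) :
    (D * B) i i = D i i * B i i := by
  rw [mul_apply, Finset.sum_eq_single i (fun k _ hk => by rw [hD hk.symm, zero_mul])
    (fun hi => absurd (Finset.mem_univ i) hi)]

end IsDiag

theorem apply_self_eq_zero_of_transpose_add_self_eq_zero {ι R : Type*} [NonAssocSemiring R]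
    [NoZeroDivisors R] [CharZero R] {B : Matrix ι ι R} (hB : Bᵀ + B = 0) (i : ι) :
    B i i = 0 :=
  add_self_eq_zero.mp (congr_fun₂ hB i i)

theorem transpose_mul_mul_svd_derivative {ι κ R : Type*} [Fintype ι] [DecidableEq ι]
    [Fintype κ] [CommRing R] {U U' S S' : Matrix ι ι R} {V V' : Matrix κ ι R}
    (hU : Uᵀ * U = 1) (hV : Vᵀ * V = 1) :
    Uᵀ * ((U' * S + U * S') * Vᵀ + U * S * V'ᵀ) * V = Uᵀ * U' * S + S' + S * (V'ᵀ * V) := by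
  calc Uᵀ * ((U' * S + U * S') * Vᵀ + U * S * V'ᵀ) * V
      = Uᵀ * U' * S * (Vᵀ * V) + (Uᵀ * U) * S' * (Vᵀ * V) + (Uᵀ * U) * S * (V'ᵀ * V) := by
        simp only [Matrix.add_mul, Matrix.mul_add, Matrix.mul_assoc]
    _ = Uᵀ * U' * S + S' + S * (V'ᵀ * V) := by
        rw [hU, hV, Matrix.one_mul, Matrix.one_mul, Matrix.mul_one, Matrix.mul_one]

variable {𝕜 ι κ ν : Type*} [NontriviallyNormedField 𝕜]

def HasEntrywiseDerivAt (A : 𝕜 → Matrix ι κ 𝕜) (A' : Matrix ι κ 𝕜) (x : 𝕜) : Prop :=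
  ∀ i j, HasDerivAt (fun t => A t i j) (A' i j) x

namespace HasEntrywiseDerivAt

variable {A : 𝕜 → Matrix ι κ 𝕜} {A' A'' : Matrix ι κ 𝕜} {x : 𝕜}

theorem unique (h₁ : HasEntrywiseDerivAt A A' x) (h₂ : HasEntrywiseDerivAt A A'' x) :
    A' = A'' :=
  Matrix.ext fun i j => (h₁ i j).unique (h₂ i j)

theorem const (C : Matrix ι κ 𝕜) (x : 𝕜) : HasEntrywiseDerivAt (fun _ => C) 0 x :=
  fun i j => hasDerivAt_const x (C i j)

theorem transpose (h : HasEntrywiseDerivAt A A' x) :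
    HasEntrywiseDerivAt (fun t => (A t)ᵀ) A'ᵀ x :=
  fun i j => h j i

theorem mul [Fintype κ] {B : 𝕜 → Matrix κ ν 𝕜} {B' : Matrix κ ν 𝕜}
    (hA : HasEntrywiseDerivAt A A' x) (hB : HasEntrywiseDerivAt B B' x) :
    HasEntrywiseDerivAt (fun t => A t * B t) (A' * B x + A x * B') x := by
  intro i j
  simpa only [mul_apply, add_apply, Finset.sum_add_distrib] using
    HasDerivAt.fun_sum fun k _ => (hA i k).fun_mul (hB k j)

theorem transpose_mul_add_transpose_mul_eq_zero [Fintype ι] [DecidableEq κ]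
    (h : HasEntrywiseDerivAt A A' x) (horth : ∀ t, (A t)ᵀ * A t = 1) :
    A'ᵀ * A x + (A x)ᵀ * A' = 0 := by
  have hconst : (fun t => (A t)ᵀ * A t) = fun _ => 1 := funext horth
  have hprod := h.transpose.mul h
  rw [hconst] at hprod
  exact hprod.unique (const 1 x)

end HasEntrywiseDerivAt

end Matrix

theorem singular_value_derivative_general
    (n m : ℕ)
    (M : ℝ → Matrix (Fin n) (Fin m) ℝ)
    (U : ℝ → Matrix (Fin n) (Fin n) ℝ)
    (S : ℝ → Matrix (Fin n) (Fin n) ℝ)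
    (V : ℝ → Matrix (Fin m) (Fin n) ℝ)
    (M' : Matrix (Fin n) (Fin m) ℝ)
    (U' : Matrix (Fin n) (Fin n) ℝ)
    (S' : Matrix (Fin n) (Fin n) ℝ)
    (V' : Matrix (Fin m) (Fin n) ℝ)
    (hSVD : ∀ t, M t = U t * S t * (V t)ᵀ)
    (hUorth : ∀ t, (U t)ᵀ * U t = 1)
    (hVorth : ∀ t, (V t)ᵀ * V t = 1)
    (hSdiag : ∀ t i j, i ≠ j → S t i j = 0)
    (hM' : ∀ i j, HasDerivAt (fun t => M t i j) (M' i j) 0)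
    (hU' : ∀ i j, HasDerivAt (fun t => U t i j) (U' i j) 0)
    (hS' : ∀ i j, HasDerivAt (fun t => S t i j) (S' i j) 0)
    (hV' : ∀ i j, HasDerivAt (fun t => V t i j) (V' i j) 0) :
    ∀ i : Fin n, S' i i = ((U 0)ᵀ * M' * V 0) i i := by
  intro i
  have hU : HasEntrywiseDerivAt U U' 0 := hU'
  have hV : HasEntrywiseDerivAt V V' 0 := hV'
  obtain rfl : M = fun t => U t * S t * (V t)ᵀ := funext hSVD
  have hM : M' = (U' * S 0 + U 0 * S') * (V 0)ᵀ + U 0 * S 0 * V'ᵀ :=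
    HasEntrywiseDerivAt.unique hM' ((hU.mul hS').mul hV.transpose)
  have hUskew : ((U 0)ᵀ * U')ᵀ + (U 0)ᵀ * U' = 0 := by
    rw [transpose_mul, transpose_transpose]
    exact hU.transpose_mul_add_transpose_mul_eq_zero hUorth
  have hVskew : (V'ᵀ * V 0)ᵀ + V'ᵀ * V 0 = 0 := by
    rw [transpose_mul, transpose_transpose, add_comm]
    exact hV.transpose_mul_add_transpose_mul_eq_zero hVorth
  rw [hM, transpose_mul_mul_svd_derivative (hUorth 0) (hVorth 0),
    Matrix.add_apply, Matrix.add_apply,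
    IsDiag.mul_apply_self (hSdiag 0), IsDiag.apply_self_mul (hSdiag 0),
    apply_self_eq_zero_of_transpose_add_self_eq_zero hUskew,
    apply_self_eq_zero_of_transpose_add_self_eq_zero hVskew]
  ring

/-- Derivative of the singular values: if `M(t) = U(t) Σ(t) V(t)ᵀ` is a
differentiable (thin) SVD family of `n × m` matrices (`n ≤ m`) with simple
positive singular values at `t = 0`, then `Σ'(0)ᵢᵢ = (U(0)ᵀ M'(0) V(0))ᵢᵢ`,
i.e. `σᵢ'(0) = uᵢᵀ M'(0) vᵢ`. -/
theorem singular_value_derivative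
    (n m : ℕ) (hnm : n ≤ m)
    (M : ℝ → Matrix (Fin n) (Fin m) ℝ)
    (U : ℝ → Matrix (Fin n) (Fin n) ℝ)
    (S : ℝ → Matrix (Fin n) (Fin n) ℝ)
    (V : ℝ → Matrix (Fin m) (Fin n) ℝ)
    (M' : Matrix (Fin n) (Fin m) ℝ)
    (U' : Matrix (Fin n) (Fin n) ℝ)
    (S' : Matrix (Fin n) (Fin n) ℝ)
    (V' : Matrix (Fin m) (Fin n) ℝ)
    (hSVD : ∀ t, M t = U t * S t * (V t)ᵀ)
    (hUorth : ∀ t, (U t)ᵀ * U t = 1)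
    (hVorth : ∀ t, (V t)ᵀ * V t = 1)
    (hSdiag : ∀ t i j, i ≠ j → S t i j = 0)
    (hpos : ∀ i, 0 < S 0 i i)
    (hsimple : ∀ i j : Fin n, (i : ℕ) < (j : ℕ) → S 0 j j < S 0 i i)
    (hM' : ∀ i j, HasDerivAt (fun t => M t i j) (M' i j) 0)
    (hU' : ∀ i j, HasDerivAt (fun t => U t i j) (U' i j) 0)
    (hS' : ∀ i j, HasDerivAt (fun t => S t i j) (S' i j) 0)
    (hV' : ∀ i j, HasDerivAt (fun t => V t i j) (V' i j) 0) :
    ∀ i : Fin n, S' i i = ((U 0)ᵀ * M' * V 0) i i :=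
  singular_value_derivative_general n m M U S V M' U' S' V' hSVD hUorth hVorth hSdiag hM' hU' hS'
    hV'
end

section
/- Orthogonal matrices of the Kronecker product form Q = Q_l ⊗ Q_r leave the rank of the permuted unfolding invariant: rank(A((Q_l ⊗ Q_r) X)) = rank(A(X)), where A is the reshaping map M ∘ P ∘ M^{-1} that regroups indices (l,r,b,c) → (l,c,r,b). -/
open Matrix Kronecker

/-- The reshaping map `A : ℝ^{lr×bc} → ℝ^{lc×rb}` regrouping tensor indices
`(l,r,b,c) → (l,c,r,b)`. -/
def reshapeA (l r b c : ℕ) (X : Matrix (Fin l × Fin r) (Fin b × Fin c) ℝ) :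
    Matrix (Fin l × Fin c) (Fin r × Fin b) ℝ :=
  Matrix.of fun p q => X (p.1, q.1) (q.2, p.2)

theorem reshapeA_kronecker_mul {l r b c : ℕ} (A : Matrix (Fin l) (Fin l) ℝ)
    (B : Matrix (Fin r) (Fin r) ℝ) (X : Matrix (Fin l × Fin r) (Fin b × Fin c) ℝ) :
    reshapeA l r b c ((A ⊗ₖ B) * X) =
      (A ⊗ₖ (1 : Matrix (Fin c) (Fin c) ℝ)) * reshapeA l r b c X *
        (B ⊗ₖ (1 : Matrix (Fin b) (Fin b) ℝ))ᵀ := by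
  ext ⟨i, k⟩ ⟨j, m⟩
  simp only [reshapeA, mul_apply, transpose_apply, of_apply, kroneckerMap_apply,
    Fintype.sum_prod_type, one_apply, mul_ite, ite_mul, mul_one, mul_zero, zero_mul,
    Finset.sum_ite_eq, Finset.mem_univ, if_true, Finset.sum_mul]
  rw [Finset.sum_comm]
  refine Finset.sum_congr rfl fun _ _ => Finset.sum_congr rfl fun _ _ => by ring

theorem rank_mul_mul_of_isUnit {m n : Type*} [Fintype m] [Fintype n] [DecidableEq m]
    [DecidableEq n] {R : Type*} [CommRing R] {P : Matrix m m R} {Q : Matrix n n R}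
    (hP : IsUnit P) (hQ : IsUnit Q) (M : Matrix m n R) : (P * M * Q).rank = M.rank := by
  rw [rank_mul_eq_left_of_isUnit_det _ _ ((isUnit_iff_isUnit_det Q).1 hQ),
    rank_mul_eq_right_of_isUnit_det _ _ ((isUnit_iff_isUnit_det P).1 hP)]

/-- Orthogonal gauge transformations of Kronecker product form
`Q = Q_l ⊗ Q_r` leave the rank of the permuted unfolding invariant:
`rank (A((Q_l ⊗ Q_r) X)) = rank (A X)`. -/
theorem kronecker_gauge_rank_invariant
    (l r b c : ℕ)
    (Ql : Matrix (Fin l) (Fin l) ℝ) (Qr : Matrix (Fin r) (Fin r) ℝ)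
    (hQl : Qlᵀ * Ql = 1) (hQr : Qrᵀ * Qr = 1)
    (X : Matrix (Fin l × Fin r) (Fin b × Fin c) ℝ) :
    (reshapeA l r b c ((Ql ⊗ₖ Qr) * X)).rank = (reshapeA l r b c X).rank := by
  have hl : IsUnit Ql := .of_mul_eq_one_right _ hQl
  have hr : IsUnit Qr := .of_mul_eq_one_right _ hQr
  rw [reshapeA_kronecker_mul]
  exact rank_mul_mul_of_isUnit (hl.kronecker isUnit_one)
    ((isUnit_transpose _).2 (hr.kronecker isUnit_one)) _
end
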